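/- arXiv:2101.11182 — 6 statements merged into one kernel-verified Lean document; each statement's English description precedes it below -/
import Mathlib

section
/- Under the conditional independence condition f(Y | X, S=1) = f(Y | X, S=0) on the support of the target population, and positivity P(S=1 | X=x) > 0 on that support, the target-population expected loss ψ = E[L(Y, g(X)) | S = 0] equals the standardized expression E[ E[L(Y, g(X)) | X, S=1] | S=0 ] for any measurable loss function L with L(Y, g(X)) integrable. -/
open MeasureTheory ProbabilityTheory

/-- Under conditional independence of `Y` and `S` given `X` on the target support
(equality of conditional distributions of `Y` given `X` between source `S = 1` and
target `S = 0`) and positivity (`P(S=1 | X = x) > 0` a.e. on the target support of `X`),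
the target-population expected loss `ψ = E[L(Y, g(X)) | S = 0]` equals the standardized
expression `E[ E[L(Y, g(X)) | X, S = 1] | S = 0 ]`, for any measurable loss `L` with
`L(Y, g(X))` integrable. -/
theorem stmt_1 {Ω : Type*} [MeasurableSpace Ω] {d : ℕ}
    (μ : Measure Ω) [IsProbabilityMeasure μ]
    (Y : Ω → ℝ) (X : Ω → (Fin d → ℝ)) (S : Ω → Bool)
    (g : (Fin d → ℝ) → ℝ) (L : ℝ → ℝ → ℝ)
    (hY : Measurable Y) (hX : Measurable X) (hS : Measurable S)
    (hg : Measurable g) (hL : Measurable (Function.uncurry L))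
    (hs1 : μ {ω | S ω = true} ≠ 0) (hs0 : μ {ω | S ω = false} ≠ 0)
    (hLint : Integrable (fun ω => L (Y ω) (g (X ω))) μ)
    (hpos : ∀ᵐ x ∂((μ[|{ω | S ω = false}]).map X),
      0 < condDistrib S X μ x {true})
    (hcondDist : ∀ᵐ x ∂((μ[|{ω | S ω = false}]).map X),
      condDistrib Y X (μ[|{ω | S ω = true}]) x
        = condDistrib Y X (μ[|{ω | S ω = false}]) x) :
    ∫ ω, L (Y ω) (g (X ω)) ∂(μ[|{ω | S ω = false}])
      = ∫ x, (∫ y, L y (g x) ∂(condDistrib Y X (μ[|{ω | S ω = true}]) x))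
          ∂((μ[|{ω | S ω = false}]).map X) := by
  set μ0 := μ[|{ω | S ω = false}] with hμ0
  have hm0 : MeasurableSet {ω | S ω = false} := hS (measurableSet_singleton false)
  haveI : IsProbabilityMeasure μ0 := cond_isProbabilityMeasure hs0
  -- integrability over μ0
  have hint0 : Integrable (fun ω => L (Y ω) (g (X ω))) μ0 := by
    rw [hμ0, ProbabilityTheory.cond]
    exact (hLint.restrict).smul_measure (by simp [hs0])
  set f : (Fin d → ℝ) × ℝ → ℝ := fun p => L p.2 (g p.1) with hf
  have hfm : Measurable f := hL.comp (measurable_snd.prodMk (hg.comp measurable_fst))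
  set ρ : Measure ((Fin d → ℝ) × ℝ) := μ0.map (fun ω => (X ω, Y ω)) with hρ
  have hXY : Measurable fun ω => (X ω, Y ω) := hX.prodMk hY
  have hρint : Integrable f ρ := by
    rw [hρ, integrable_map_measure hfm.aestronglyMeasurable hXY.aemeasurable]
    exact hint0
  have h1 : ∫ ω, L (Y ω) (g (X ω)) ∂μ0 = ∫ p, f p ∂ρ := by
    rw [hρ, integral_map hXY.aemeasurable hfm.aestronglyMeasurable]
  have h2 : ∫ p, f p ∂ρ
      = ∫ x, ∫ y, f (x, y) ∂(condDistrib Y X μ0 x) ∂(μ0.map X) := by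
    have hfst : (Measure.map (fun a => (X a, Y a)) μ0).fst = μ0.map X :=
      Measure.fst_map_prodMk₀ (X := X) hY.aemeasurable
    rw [condDistrib, ← hfst]
    exact (MeasureTheory.Measure.integral_condKernel hρint).symm
  rw [h1, h2]
  refine integral_congr_ae ?_
  filter_upwards [hcondDist] with x hx
  rw [hx]
end

section
/- Under conditional independence of Y and S given X (on the target support) and positivity, the target-population expected loss satisfies the inverse-odds weighting identity: E[L(Y, g(X)) | S = 0] = (1 / P(S=0)) · E[ 1{S=1} · (P(S=0 | X) / P(S=1 | X)) · L(Y, g(X)) ]. -/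
/-!
Disintegrating along `X`, the target risk is `∫ G₀ d(P_X | S = 0)`, where
`G_b(x) = E[L(Y, g(X)) | X = x, S = b]`. The conditional laws `P_X | S = b` have densities
proportional to `P(S = b | X = x)` with respect to `P_X`, so reweighting the source law by the
odds `P(S = 0 | X) / P(S = 1 | X)` turns it into the target law; conditional independence then
replaces `G₁` by `G₀` on the target support.
-/

open MeasureTheory ProbabilityTheory
open scoped ENNReal

theorem integral_withDensity_div_mul_eq {β : Type*} [MeasurableSpace β] {ν : Measure β}
    {p q : β → ℝ≥0∞} (hp : Measurable p) (hq : Measurable q)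
    (hp_top : ∀ᵐ x ∂ν, p x < ∞) (hq_top : ∀ᵐ x ∂ν, q x < ∞)
    (hq_pos : ∀ᵐ x ∂ν.withDensity p, q x ≠ 0) (h : β → ℝ) :
    ∫ x, (p x).toReal / (q x).toReal * h x ∂ν.withDensity q
      = ∫ x, h x ∂ν.withDensity p := by
  rw [integral_withDensity_eq_integral_toReal_smul hq hq_top,
    integral_withDensity_eq_integral_toReal_smul hp hp_top]
  refine integral_congr_ae ?_
  filter_upwards [(ae_withDensity_iff hp).mp hq_pos, hq_top] with x hx hx_top
  by_cases hpx : p x = 0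
  · simp [hpx]
  · have : (q x).toReal ≠ 0 := ENNReal.toReal_ne_zero.mpr ⟨hx hpx, hx_top.ne⟩
    simp only [smul_eq_mul]
    field_simp

namespace ProbabilityTheory

variable {Ω : Type*} [MeasurableSpace Ω] {μ : Measure Ω}

theorem _root_.MeasureTheory.Integrable.cond {E : Type*} [NormedAddCommGroup E] {f : Ω → E}
    (hf : Integrable f μ) (s : Set Ω) : Integrable f μ[|s] := by
  obtain hs | hs := eq_or_ne (μ s) 0
  · simp [cond_eq_zero_of_meas_eq_zero hs]
  · exact hf.restrict.smul_measure (ENNReal.inv_ne_top.mpr hs)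

variable [IsFiniteMeasure μ]

theorem smul_cond_eq_restrict {s : Set Ω} (hs : MeasurableSet s) :
    μ s • μ[|s] = μ.restrict s := by
  ext t ht
  rw [Measure.smul_apply, smul_eq_mul, mul_comm, cond_mul_eq_inter hs, Measure.restrict_apply ht,
    Set.inter_comm]

theorem integral_indicator_eq_toReal_mul_integral_cond {E : Type*} [NormedAddCommGroup E]
    [NormedSpace ℝ E] {s : Set Ω} (hs : MeasurableSet s) (f : Ω → E) :
    ∫ ω, s.indicator f ω ∂μ = (μ s).toReal • ∫ ω, f ω ∂μ[|s] := by
  rw [integral_indicator hs, ← smul_cond_eq_restrict hs, integral_smul_measure]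

variable {α β γ : Type*} [MeasurableSpace α] [StandardBorelSpace α] [Nonempty α]
  [MeasurableSpace β] [MeasurableSpace γ] [StandardBorelSpace γ] [Nonempty γ]

theorem integral_comp_eq_integral_integral_condDistrib {E : Type*} [NormedAddCommGroup E]
    [NormedSpace ℝ E] {X : Ω → β} {Y : Ω → γ} (hX : AEMeasurable X μ)
    (hY : AEMeasurable Y μ)
    {f : β × γ → E} (hf : AEStronglyMeasurable f (μ.map fun ω => (X ω, Y ω)))
    (hf_int : Integrable (fun ω => f (X ω, Y ω)) μ) :
    ∫ ω, f (X ω, Y ω) ∂μ = ∫ x, ∫ y, f (x, y) ∂condDistrib Y X μ x ∂μ.map X := by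
  have hmap : (μ.map X) ⊗ₘ condDistrib Y X μ = μ.map fun ω => (X ω, Y ω) :=
    compProd_map_condDistrib hY
  rw [← integral_map (hX.prodMk hY) hf, ← hmap]
  refine Measure.integral_compProd ?_
  rwa [hmap, integrable_map_measure hf (hX.prodMk hY)]

theorem withDensity_condDistrib_eq_smul_map_cond {X : Ω → β} {S : Ω → α} (hX : Measurable X)
    (hS : Measurable S) {s : Set α} (hs : MeasurableSet s) :
    (μ.map X).withDensity (fun x => condDistrib S X μ x s)
      = μ (S ⁻¹' s) • (μ[|S ⁻¹' s]).map X := by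
  ext B hB
  rw [withDensity_apply _ hB, setLIntegral_map hB (Kernel.measurable_coe _ hs) hX,
    setLIntegral_preimage_condDistrib hX hS.aemeasurable hs hB, Measure.smul_apply,
    Measure.map_apply hX hB, smul_eq_mul, mul_comm, cond_mul_eq_inter (hS hs), Set.inter_comm]

theorem toReal_mul_integral_map_cond_odds_mul {X : Ω → β} {S : Ω → α} (hX : Measurable X)
    (hS : Measurable S) {s t : Set α} (hs : MeasurableSet s) (ht : MeasurableSet t)
    (hpos : ∀ᵐ x ∂(μ[|S ⁻¹' s]).map X, condDistrib S X μ x t ≠ 0) (h : β → ℝ) :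
    (μ (S ⁻¹' t)).toReal
        * ∫ x, (condDistrib S X μ x s).toReal / (condDistrib S X μ x t).toReal * h x
            ∂(μ[|S ⁻¹' t]).map X
      = (μ (S ⁻¹' s)).toReal * ∫ x, h x ∂(μ[|S ⁻¹' s]).map X := by
  simp only [← smul_eq_mul, ← integral_smul_measure,
    ← withDensity_condDistrib_eq_smul_map_cond hX hS hs,
    ← withDensity_condDistrib_eq_smul_map_cond hX hS ht]
  refine integral_withDensity_div_mul_eq (Kernel.measurable_coe _ hs) (Kernel.measurable_coe _ ht)
    (ae_of_all _ fun _ => measure_lt_top _ _) (ae_of_all _ fun _ => measure_lt_top _ _) ?_ h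
  rw [withDensity_condDistrib_eq_smul_map_cond hX hS hs]
  exact Measure.ae_smul_measure hpos _

end ProbabilityTheory

theorem stmt_2_general {Ω : Type*} [MeasurableSpace Ω] {d : ℕ}
    (μ : Measure Ω) [IsProbabilityMeasure μ]
    (Y : Ω → ℝ) (X : Ω → (Fin d → ℝ)) (S : Ω → Bool)
    (g : (Fin d → ℝ) → ℝ) (L : ℝ → ℝ → ℝ)
    (hY : Measurable Y) (hX : Measurable X) (hS : Measurable S)
    (hg : Measurable g) (hL : Measurable (Function.uncurry L))
    (hs0 : μ {ω | S ω = false} ≠ 0)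
    (hLint : Integrable (fun ω => L (Y ω) (g (X ω))) μ)
    (hWint : Integrable (fun ω =>
      if S ω = true then
        ((condDistrib S X μ (X ω) {false}).toReal
            / (condDistrib S X μ (X ω) {true}).toReal) * L (Y ω) (g (X ω))
      else 0) μ)
    (hpos : ∀ᵐ x ∂((μ[|{ω | S ω = false}]).map X),
      0 < condDistrib S X μ x {true})
    (hcondDist : ∀ᵐ x ∂((μ[|{ω | S ω = false}]).map X),
      condDistrib Y X (μ[|{ω | S ω = true}]) x
        = condDistrib Y X (μ[|{ω | S ω = false}]) x) :
    ∫ ω, L (Y ω) (g (X ω)) ∂(μ[|{ω | S ω = false}])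
      = (1 / (μ {ω | S ω = false}).toReal)
          * ∫ ω, (if S ω = true then
              ((condDistrib S X μ (X ω) {false}).toReal
                  / (condDistrib S X μ (X ω) {true}).toReal) * L (Y ω) (g (X ω))
            else 0) ∂μ := by
  have hpreimage : ∀ b, {ω | S ω = b} = S ⁻¹' {b} := fun _ => rfl
  simp only [hpreimage] at *
  set ℓ : (Fin d → ℝ) × ℝ → ℝ := fun p => L p.2 (g p.1)
  set w : (Fin d → ℝ) → ℝ := fun x =>
    (condDistrib S X μ x {false}).toReal / (condDistrib S X μ x {true}).toReal
  set G : Bool → (Fin d → ℝ) → ℝ := fun b x =>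
    ∫ y, ℓ (x, y) ∂condDistrib Y X (μ[|S ⁻¹' {b}]) x
  have hℓ : Measurable ℓ := hL.comp (measurable_snd.prodMk (hg.comp measurable_fst))
  have hw : Measurable w :=
    (Kernel.measurable_coe _ (measurableSet_singleton false)).ennreal_toReal.div
      (Kernel.measurable_coe _ (measurableSet_singleton true)).ennreal_toReal
  have hA1 : MeasurableSet (S ⁻¹' {true}) := hS (measurableSet_singleton true)
  have hite : (fun ω => if S ω = true then w (X ω) * ℓ (X ω, Y ω) else 0)
      = (S ⁻¹' {true}).indicator fun ω => w (X ω) * ℓ (X ω, Y ω) := by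
    ext ω
    by_cases h : S ω = true <;> simp [h]
  have hWint1 : Integrable (fun ω => w (X ω) * ℓ (X ω, Y ω)) (μ[|S ⁻¹' {true}]) :=
    (hWint.cond _).congr ((ae_cond_mem hA1).mono fun ω hω => if_pos hω)
  have htarget : ∫ ω, ℓ (X ω, Y ω) ∂(μ[|S ⁻¹' {false}])
      = ∫ x, G false x ∂(μ[|S ⁻¹' {false}]).map X :=
    integral_comp_eq_integral_integral_condDistrib hX.aemeasurable hY.aemeasurable
      hℓ.aestronglyMeasurable (hLint.cond _)
  have hsource : ∫ ω, w (X ω) * ℓ (X ω, Y ω) ∂(μ[|S ⁻¹' {true}])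
      = ∫ x, w x * G true x ∂(μ[|S ⁻¹' {true}]).map X := by
    rw [integral_comp_eq_integral_integral_condDistrib (f := fun p => w p.1 * ℓ p)
      hX.aemeasurable hY.aemeasurable ((hw.comp measurable_fst).mul hℓ).aestronglyMeasurable
      hWint1]
    simp only [integral_const_mul, G]
  have hreweight := toReal_mul_integral_map_cond_odds_mul hX hS (measurableSet_singleton false)
    (measurableSet_singleton true) (hpos.mono fun _ hx => hx.ne') (G true)
  have hcondIndep : ∫ x, G true x ∂(μ[|S ⁻¹' {false}]).map X
      = ∫ x, G false x ∂(μ[|S ⁻¹' {false}]).map X :=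
    integral_congr_ae (hcondDist.mono fun x hx => by simp only [G, hx])
  have hs0' : (μ (S ⁻¹' {false})).toReal ≠ 0 :=
    ENNReal.toReal_ne_zero.mpr ⟨hs0, measure_ne_top _ _⟩
  change ∫ ω, ℓ (X ω, Y ω) ∂(μ[|S ⁻¹' {false}]) = 1 / (μ (S ⁻¹' {false})).toReal
    * ∫ ω, (if S ω = true then w (X ω) * ℓ (X ω, Y ω) else 0) ∂μ
  rw [hite, integral_indicator_eq_toReal_mul_integral_cond hA1, hsource, smul_eq_mul, hreweight,
    hcondIndep, htarget]
  field_simp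

/-- Under conditional independence of `Y` and `S` given `X` (on the target support) and
positivity, the target-population expected loss satisfies the inverse-odds weighting
identity:
`E[L(Y, g(X)) | S = 0] = (1 / P(S=0)) · E[ 1{S=1} · (P(S=0|X)/P(S=1|X)) · L(Y, g(X)) ]`. -/
theorem stmt_2 {Ω : Type*} [MeasurableSpace Ω] {d : ℕ}
    (μ : Measure Ω) [IsProbabilityMeasure μ]
    (Y : Ω → ℝ) (X : Ω → (Fin d → ℝ)) (S : Ω → Bool)
    (g : (Fin d → ℝ) → ℝ) (L : ℝ → ℝ → ℝ)
    (hY : Measurable Y) (hX : Measurable X) (hS : Measurable S)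
    (hg : Measurable g) (hL : Measurable (Function.uncurry L))
    (hs1 : μ {ω | S ω = true} ≠ 0) (hs0 : μ {ω | S ω = false} ≠ 0)
    (hLint : Integrable (fun ω => L (Y ω) (g (X ω))) μ)
    (hWint : Integrable (fun ω =>
      if S ω = true then
        ((condDistrib S X μ (X ω) {false}).toReal
            / (condDistrib S X μ (X ω) {true}).toReal) * L (Y ω) (g (X ω))
      else 0) μ)
    (hpos : ∀ᵐ x ∂((μ[|{ω | S ω = false}]).map X),
      0 < condDistrib S X μ x {true})
    (hcondDist : ∀ᵐ x ∂((μ[|{ω | S ω = false}]).map X),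
      condDistrib Y X (μ[|{ω | S ω = true}]) x
        = condDistrib Y X (μ[|{ω | S ω = false}]) x) :
    ∫ ω, L (Y ω) (g (X ω)) ∂(μ[|{ω | S ω = false}])
      = (1 / (μ {ω | S ω = false}).toReal)
          * ∫ ω, (if S ω = true then
              ((condDistrib S X μ (X ω) {false}).toReal
                  / (condDistrib S X μ (X ω) {true}).toReal) * L (Y ω) (g (X ω))
            else 0) ∂μ :=
  stmt_2_general μ Y X S g L hY hX hS hg hL hs0 hLint hWint hpos hcondDist
end

section
/- There exist random variables Y, X, S such that E[Y | X, S=1] = E[Y | X, S=0] (mean exchangeability) holds, yet E[(Y − g(X))² | S=0] ≠ E[ E[(Y − g(X))² | X, S=1] | S=0 ] for some prediction function g; i.e., mean exchangeability alone is insufficient to identify the target-population MSE via standardization of source conditional errors. -/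
open MeasureTheory ProbabilityTheory ENNReal

lemma condDistrib_const' {Ω' : Type*} [MeasurableSpace Ω'] (ν : Measure Ω')
    [IsProbabilityMeasure ν] (Y : Ω' → ℝ) (hY : Measurable Y) (c : ℝ) :
    condDistrib Y (fun _ => c) ν c = ν.map Y := by
  have hmap : ν.map (fun _ : Ω' => c) = Measure.dirac c := by simp [Measure.map_const]
  have hne : ν.map (fun _ : Ω' => c) {c} ≠ 0 := by
    rw [hmap, Measure.dirac_apply_of_mem (Set.mem_singleton c)]; exact one_ne_zero
  ext s hs
  rw [condDistrib_apply_of_ne_zero hY c hne s, hmap,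
    Measure.dirac_apply_of_mem (Set.mem_singleton c), inv_one, one_mul,
    Measure.map_apply (measurable_const.prodMk hY) ((measurableSet_singleton c).prod hs),
    Measure.map_apply hY hs]
  congr 1
  ext a
  simp

lemma two_mul_four_inv : (2:ℝ≥0∞) * 4⁻¹ = 2⁻¹ := by
  rw [show (4:ℝ≥0∞) = 2*2 by norm_num, ENNReal.mul_inv (by norm_num) (by norm_num),
    ← mul_assoc, ENNReal.mul_inv_cancel (by norm_num) (by norm_num), one_mul]

lemma four_inv_add : (4:ℝ≥0∞)⁻¹ + 4⁻¹ = 2⁻¹ := by rw [← two_mul]; exact two_mul_four_inv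

noncomputable def myμ : Measure (Bool × Bool) :=
  (4:ℝ≥0∞)⁻¹ • (Measure.dirac (false,false) + Measure.dirac (false,true)
    + Measure.dirac (true,false) + Measure.dirac (true,true))

instance : IsProbabilityMeasure myμ := by
  constructor
  simp [myμ]
  rw [show (4:ℝ≥0∞)⁻¹+4⁻¹+4⁻¹+4⁻¹ = (4⁻¹+4⁻¹)+(4⁻¹+4⁻¹) by ring, four_inv_add,
    ENNReal.inv_two_add_inv_two]

lemma myμ_apply (t : Set (Bool × Bool)) :
    myμ t = 4⁻¹ * (t.indicator 1 (false,false) + t.indicator 1 (false,true)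
      + t.indicator 1 (true,false) + t.indicator 1 (true,true)) := by
  simp [myμ, Measure.dirac_apply' _ (MeasurableSet.of_discrete (s := t))]
  ring

lemma myμ_S_true : myμ {ω : Bool × Bool | ω.1 = true} = 2⁻¹ := by
  rw [myμ_apply]
  simp [Set.indicator_apply]
  rw [show (4:ℝ≥0∞)⁻¹*(1+1) = 2*4⁻¹ by ring]; exact two_mul_four_inv

lemma myμ_S_false : myμ {ω : Bool × Bool | ω.1 = false} = 2⁻¹ := by
  rw [myμ_apply]
  simp [Set.indicator_apply]
  rw [show (4:ℝ≥0∞)⁻¹*(1+1) = 2*4⁻¹ by ring]; exact two_mul_four_inv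

lemma myCondT : myμ[|{ω : Bool × Bool | ω.1 = true}]
    = (2:ℝ≥0∞)⁻¹ • (Measure.dirac (true,false) + Measure.dirac (true,true)) := by
  classical
  ext t ht
  rw [cond_apply MeasurableSet.of_discrete, myμ_S_true, inv_inv, myμ_apply]
  simp [Set.indicator_apply, Measure.dirac_apply' _ ht,
    Set.mem_inter_iff]
  rw [← mul_assoc, two_mul_four_inv, mul_add]
  simp [mul_ite]

lemma myCondF : myμ[|{ω : Bool × Bool | ω.1 = false}]
    = (2:ℝ≥0∞)⁻¹ • (Measure.dirac (false,false) + Measure.dirac (false,true)) := by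
  classical
  ext t ht
  rw [cond_apply MeasurableSet.of_discrete, myμ_S_false, inv_inv, myμ_apply]
  simp [Set.indicator_apply, Measure.dirac_apply' _ ht,
    Set.mem_inter_iff]
  rw [← mul_assoc, two_mul_four_inv, mul_add]
  simp [mul_ite]

lemma integral_half_dirac (a b : Bool × Bool) (f : (Bool × Bool) → ℝ) :
    ∫ ω, f ω ∂((2:ℝ≥0∞)⁻¹ • (Measure.dirac a + Measure.dirac b))
      = (f a + f b) / 2 := by
  rw [integral_smul_measure, integral_add_measure Integrable.of_finite
    Integrable.of_finite, integral_dirac, integral_dirac]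
  simp [ENNReal.toReal_inv]
  ring

/-- There exist random variables `Y, X, S` (on some probability space) such that mean
exchangeability `E[Y | X, S=1] = E[Y | X, S=0]` holds, yet the target-population MSE
`E[(Y − g(X))² | S=0]` differs from the standardized source expression
`E[ E[(Y − g(X))² | X, S=1] | S=0 ]` for some prediction function `g`; mean
exchangeability alone does not identify the target-population MSE. -/
theorem stmt_5 :
    ∃ (Ω : Type) (_ : MeasurableSpace Ω) (μ : Measure Ω) (_ : IsProbabilityMeasure μ)
      (Y : Ω → ℝ) (X : Ω → ℝ) (S : Ω → Bool) (g : ℝ → ℝ),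
      Measurable Y ∧ Measurable X ∧ Measurable S ∧ Measurable g ∧
      μ {ω | S ω = true} ≠ 0 ∧ μ {ω | S ω = false} ≠ 0 ∧
      Integrable (fun ω => (Y ω - g (X ω)) ^ 2) μ ∧
      (∀ᵐ x ∂((μ[|{ω | S ω = false}]).map X),
        (∫ y, y ∂(condDistrib Y X (μ[|{ω | S ω = true}]) x))
          = ∫ y, y ∂(condDistrib Y X (μ[|{ω | S ω = false}]) x)) ∧
      (∫ ω, (Y ω - g (X ω)) ^ 2 ∂(μ[|{ω | S ω = false}]))
        ≠ ∫ x, (∫ y, (y - g x) ^ 2 ∂(condDistrib Y X (μ[|{ω | S ω = true}]) x))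
            ∂((μ[|{ω | S ω = false}]).map X) := by
  classical
  refine ⟨Bool × Bool, inferInstance, myμ, inferInstance,
    fun ω => if ω.1 then (if ω.2 then 1 else -1) else 0,
    fun _ => (0:ℝ), fun ω => ω.1, fun _ => (0:ℝ),
    Measurable.of_discrete, measurable_const, Measurable.of_discrete, measurable_const,
    ?_, ?_, Integrable.of_finite, ?_, ?_⟩
  · rw [show {ω : Bool × Bool | ω.1 = true} = {ω : Bool × Bool | ω.1 = true} from rfl,
      myμ_S_true]; simp
  · rw [myμ_S_false]; simp
  · set Y : Bool × Bool → ℝ := fun ω => if ω.1 then (if ω.2 then 1 else -1) else 0 with hYdef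
    haveI h1 : IsProbabilityMeasure (myμ[|{ω : Bool × Bool | ω.1 = true}]) :=
      cond_isProbabilityMeasure (by rw [myμ_S_true]; simp)
    haveI h0 : IsProbabilityMeasure (myμ[|{ω : Bool × Bool | ω.1 = false}]) :=
      cond_isProbabilityMeasure (by rw [myμ_S_false]; simp)
    have hmapX : (myμ[|{ω : Bool × Bool | ω.1 = false}]).map (fun _ => (0:ℝ))
        = Measure.dirac 0 := by simp [Measure.map_const]
    rw [hmapX, ae_dirac_eq, Filter.eventually_pure,
      condDistrib_const' _ Y Measurable.of_discrete 0,
      condDistrib_const' _ Y Measurable.of_discrete 0,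
      integral_map (f := fun y : ℝ => y) Measurable.of_discrete.aemeasurable
        measurable_id.aestronglyMeasurable,
      integral_map (f := fun y : ℝ => y) Measurable.of_discrete.aemeasurable
        measurable_id.aestronglyMeasurable,
      myCondT, myCondF, integral_half_dirac, integral_half_dirac]
    norm_num [hYdef]
  · set Y : Bool × Bool → ℝ := fun ω => if ω.1 then (if ω.2 then 1 else -1) else 0 with hYdef
    haveI h1 : IsProbabilityMeasure (myμ[|{ω : Bool × Bool | ω.1 = true}]) :=
      cond_isProbabilityMeasure (by rw [myμ_S_true]; simp)
    haveI h0 : IsProbabilityMeasure (myμ[|{ω : Bool × Bool | ω.1 = false}]) :=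
      cond_isProbabilityMeasure (by rw [myμ_S_false]; simp)
    have hmapX : (myμ[|{ω : Bool × Bool | ω.1 = false}]).map (fun _ => (0:ℝ))
        = Measure.dirac 0 := by simp [Measure.map_const]
    rw [hmapX, integral_dirac, condDistrib_const' _ Y Measurable.of_discrete 0]
    beta_reduce
    rw [integral_map (f := fun y : ℝ => (y - 0) ^ 2) Measurable.of_discrete.aemeasurable
        ((measurable_id.sub measurable_const).pow_const 2).aestronglyMeasurable,
      myCondT, myCondF, integral_half_dirac, integral_half_dirac]
    norm_num [hYdef]
end

section
/- Under conditional independence of Y and S given X and positivity, the inverse-probability-weighted estimator ψ̂ = [Σᵢ 1{Sᵢ=1} o(Xᵢ) (Yᵢ − g(Xᵢ))²] / [Σᵢ 1{Sᵢ=0}] with true weights o(X) = P(S=0 | X)/P(S=1 | X), computed from n i.i.d. copies of (X, S, SY), converges almost surely to the target-population MSE E[(Y − g(X))² | S=0] as n → ∞. -/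
/-!
Both sums are empirical means of i.i.d. integrable variables, so by the strong law the ratio
converges almost surely to `E[1{S=1} o(X) ℓ(X,Y)] / P(S=0)` with `ℓ(x,y) = (y - g x)²`.
Restricted to `{S = s}`, the law of `X` has density `P(S=s | X)` with respect to the law of `X`,
so the odds `o = P(S=0 | X) / P(S=1 | X)` (a genuine ratio on the target support by positivity)
turn the source law of `X` into the target one; since `Y` has the same conditional law given `X`
in both populations, `E[1{S=1} o(X) ℓ(X,Y)] = E[1{S=0} ℓ(X,Y)] = P(S=0) E[ℓ(X,Y) | S=0]`.
-/

open MeasureTheory ProbabilityTheory Filter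
open scoped ENNReal Topology

namespace ProbabilityTheory

variable {α β γ Ω : Type*} {mα : MeasurableSpace α} {mβ : MeasurableSpace β}
  [MeasurableSpace γ] [StandardBorelSpace γ] [Nonempty γ]
  [MeasurableSpace Ω] [StandardBorelSpace Ω] [Nonempty Ω]
  {μ : Measure α} [IsFiniteMeasure μ] {X : α → β} {S : α → γ} {Y : α → Ω}

lemma measure_smul_cond (μ : Measure α) [IsFiniteMeasure μ] (s : Set α) :
    μ s • μ[|s] = μ.restrict s := by
  rw [cond, smul_smul]
  by_cases hs : μ s = 0
  · simp [Measure.restrict_eq_zero.mpr hs]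
  · rw [ENNReal.mul_inv_cancel hs (measure_ne_top μ s), one_smul]

lemma integral_cond_eq_setIntegral_div (μ : Measure α) (s : Set α) (f : α → ℝ) :
    ∫ a, f a ∂μ[|s] = (∫ a in s, f a ∂μ) / (μ s).toReal := by
  rw [cond, integral_smul_measure, ENNReal.toReal_inv, smul_eq_mul, inv_mul_eq_div]

lemma ae_map_restrict_of_ae_map_cond {s : Set α} {p : β → Prop}
    (h : ∀ᵐ x ∂(μ[|s]).map X, p x) : ∀ᵐ x ∂(μ.restrict s).map X, p x := by
  rw [← measure_smul_cond, Measure.map_smul]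
  exact Measure.ae_smul_measure h _

lemma lintegral_comp_eq_lintegral_condDistrib (hX : Measurable X) (hY : Measurable Y)
    {f : β → Ω → ℝ≥0∞} (hf : Measurable (Function.uncurry f)) :
    ∫⁻ a, f (X a) (Y a) ∂μ = ∫⁻ x, ∫⁻ y, f x y ∂(condDistrib Y X μ x) ∂(μ.map X) := by
  calc ∫⁻ a, f (X a) (Y a) ∂μ = ∫⁻ p, Function.uncurry f p ∂(μ.map fun a => (X a, Y a)) :=
        (lintegral_map hf (hX.prodMk hY)).symm
    _ = _ := by
        rw [← compProd_map_condDistrib hY.aemeasurable, Measure.lintegral_compProd hf]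
        rfl

lemma setLIntegral_comp_eq_lintegral_condDistrib_cond (hX : Measurable X) (hY : Measurable Y)
    (s : Set α) {f : β → Ω → ℝ≥0∞} (hf : Measurable (Function.uncurry f)) :
    ∫⁻ a in s, f (X a) (Y a) ∂μ
      = ∫⁻ x, ∫⁻ y, f x y ∂(condDistrib Y X μ[|s] x) ∂((μ.restrict s).map X) := by
  rw [← measure_smul_cond, lintegral_smul_measure, Measure.map_smul, lintegral_smul_measure,
    lintegral_comp_eq_lintegral_condDistrib hX hY hf]

lemma withDensity_condDistrib_eq_map_restrict (hX : Measurable X) (hS : Measurable S)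
    {t : Set γ} (ht : MeasurableSet t) :
    (μ.map X).withDensity (fun x => condDistrib S X μ x t) = (μ.restrict (S ⁻¹' t)).map X := by
  ext A hA
  rw [withDensity_apply _ hA, setLIntegral_map hA (Kernel.measurable_coe _ ht) hX,
    setLIntegral_preimage_condDistrib hX hS.aemeasurable ht hA, Measure.map_apply hX hA,
    Measure.restrict_apply (hX hA)]

theorem setLIntegral_mul_eq_of_condDistrib_eq (hX : Measurable X) (hS : Measurable S)
    (hY : Measurable Y) {s t : Set γ} (hs : MeasurableSet s) (ht : MeasurableSet t)
    {w : β → ℝ≥0∞} (hw : Measurable w) {ℓ : β → Ω → ℝ≥0∞} (hℓ : Measurable (Function.uncurry ℓ))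
    (hratio : ∀ᵐ x ∂μ.map X, condDistrib S X μ x s * w x = condDistrib S X μ x t)
    (hcond : ∀ᵐ x ∂(μ[|S ⁻¹' t]).map X,
      condDistrib Y X μ[|S ⁻¹' s] x = condDistrib Y X μ[|S ⁻¹' t] x) :
    ∫⁻ a in S ⁻¹' s, w (X a) * ℓ (X a) (Y a) ∂μ = ∫⁻ a in S ⁻¹' t, ℓ (X a) (Y a) ∂μ := by
  set G : Set γ → β → ℝ≥0∞ := fun r x => ∫⁻ y, ℓ x y ∂(condDistrib Y X μ[|S ⁻¹' r] x)
  have hG : ∀ r, Measurable (G r) := fun r => hℓ.lintegral_kernel_prod_right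
  have hwℓ : Measurable (Function.uncurry fun x y => w x * ℓ x y) :=
    (hw.comp measurable_fst).mul hℓ
  calc ∫⁻ a in S ⁻¹' s, w (X a) * ℓ (X a) (Y a) ∂μ
      = ∫⁻ x, w x * G s x ∂(μ.restrict (S ⁻¹' s)).map X := by
        rw [setLIntegral_comp_eq_lintegral_condDistrib_cond hX hY _ hwℓ]
        exact lintegral_congr fun x => lintegral_const_mul _ (hℓ.comp measurable_prodMk_left)
    _ = ∫⁻ x, condDistrib S X μ x s * w x * G s x ∂μ.map X := by
        rw [← withDensity_condDistrib_eq_map_restrict hX hS hs,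
          lintegral_withDensity_eq_lintegral_mul _ (Kernel.measurable_coe _ hs)
            (g := fun x => w x * G s x) (hw.mul (hG s))]
        simp only [Pi.mul_apply, mul_assoc]
    _ = ∫⁻ x, condDistrib S X μ x t * G s x ∂μ.map X :=
        lintegral_congr_ae (hratio.mono fun x hx => by dsimp only; rw [hx])
    _ = ∫⁻ x, G s x ∂(μ.restrict (S ⁻¹' t)).map X := by
        rw [← withDensity_condDistrib_eq_map_restrict hX hS ht,
          lintegral_withDensity_eq_lintegral_mul _ (Kernel.measurable_coe _ ht) (hG s)]
        rfl
    _ = ∫⁻ x, G t x ∂(μ.restrict (S ⁻¹' t)).map X :=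
        lintegral_congr_ae <| (ae_map_restrict_of_ae_map_cond hcond).mono fun x hx => by
          simp only [G, hx]
    _ = ∫⁻ a in S ⁻¹' t, ℓ (X a) (Y a) ∂μ :=
        (setLIntegral_comp_eq_lintegral_condDistrib_cond hX hY _ hℓ).symm

lemma ae_condDistrib_mul_odds_eq (hX : Measurable X) (hS : Measurable S) {s t : Set γ}
    (ht : MeasurableSet t)
    (hpos : ∀ᵐ x ∂(μ[|S ⁻¹' t]).map X, 0 < condDistrib S X μ x s) :
    ∀ᵐ x ∂μ.map X, condDistrib S X μ x s *
      ENNReal.ofReal ((condDistrib S X μ x t).toReal / (condDistrib S X μ x s).toReal)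
        = condDistrib S X μ x t := by
  have hpos' : ∀ᵐ x ∂(μ.map X).withDensity (fun x => condDistrib S X μ x t),
      0 < condDistrib S X μ x s := by
    rw [withDensity_condDistrib_eq_map_restrict hX hS ht]
    exact ae_map_restrict_of_ae_map_cond hpos
  rw [ae_withDensity_iff (Kernel.measurable_coe _ ht)] at hpos'
  filter_upwards [hpos'] with x hx
  by_cases h0 : condDistrib S X μ x t = 0
  · simp [h0]
  · rw [← ENNReal.toReal_div,
      ENNReal.ofReal_toReal (ENNReal.div_lt_top (measure_ne_top _ _) (hx h0).ne').ne,
      ENNReal.mul_div_cancel (hx h0).ne' (measure_ne_top _ _)]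

end ProbabilityTheory

section OddsWeighting

variable {Θ β Ω : Type*} {mΘ : MeasurableSpace Θ} {mβ : MeasurableSpace β}
  [MeasurableSpace Ω] [StandardBorelSpace Ω] [Nonempty Ω]

theorem integral_ite_odds_mul_eq_setIntegral {ν : Measure Θ} [IsFiniteMeasure ν]
    {X : Θ → β} {S : Θ → Bool} {Y : Θ → Ω} (hX : Measurable X) (hS : Measurable S)
    (hY : Measurable Y) {ℓ : β → Ω → ℝ} (hℓ : Measurable (Function.uncurry ℓ))
    (hℓ_nonneg : ∀ x y, 0 ≤ ℓ x y)
    (hpos : ∀ᵐ x ∂(ν[|{θ | S θ = false}]).map X, 0 < condDistrib S X ν x {true})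
    (hcond : ∀ᵐ x ∂(ν[|{θ | S θ = false}]).map X,
      condDistrib Y X (ν[|{θ | S θ = true}]) x = condDistrib Y X (ν[|{θ | S θ = false}]) x) :
    ∫ θ, (if S θ = true then
        (condDistrib S X ν (X θ) {false}).toReal / (condDistrib S X ν (X θ) {true}).toReal
          * ℓ (X θ) (Y θ) else 0) ∂ν
      = ∫ θ in {θ | S θ = false}, ℓ (X θ) (Y θ) ∂ν := by
  set o : β → ℝ := fun x =>
    (condDistrib S X ν x {false}).toReal / (condDistrib S X ν x {true}).toReal
  have ho : Measurable o := (Kernel.measurable_coe _ (measurableSet_singleton _)).ennreal_toReal.div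
    (Kernel.measurable_coe _ (measurableSet_singleton _)).ennreal_toReal
  have ho_nonneg : ∀ x, 0 ≤ o x := fun x => by positivity
  have hℓXY : Measurable fun θ => ℓ (X θ) (Y θ) := hℓ.comp (hX.prodMk hY)
  calc ∫ θ, (if S θ = true then o (X θ) * ℓ (X θ) (Y θ) else 0) ∂ν
      = ∫ θ in S ⁻¹' {true}, o (X θ) * ℓ (X θ) (Y θ) ∂ν := by
        rw [← integral_indicator (hS (measurableSet_singleton true))]
        congr 1 with θ
        by_cases h : S θ = true <;> simp [h]
    _ = ∫ θ in S ⁻¹' {false}, ℓ (X θ) (Y θ) ∂ν := by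
        rw [integral_eq_lintegral_of_nonneg_ae
            (ae_of_all _ fun θ => mul_nonneg (ho_nonneg _) (hℓ_nonneg _ _))
            ((ho.comp hX).mul hℓXY).aestronglyMeasurable,
          integral_eq_lintegral_of_nonneg_ae (ae_of_all _ fun θ => hℓ_nonneg _ _)
            hℓXY.aestronglyMeasurable]
        simp_rw [ENNReal.ofReal_mul (ho_nonneg _)]
        congr 1
        exact setLIntegral_mul_eq_of_condDistrib_eq hX hS hY (measurableSet_singleton _)
          (measurableSet_singleton _) ho.ennreal_ofReal (ℓ := fun x y => ENNReal.ofReal (ℓ x y))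
          hℓ.ennreal_ofReal
          (ae_condDistrib_mul_odds_eq hX hS (measurableSet_singleton _) hpos) hcond

end OddsWeighting

section StrongLaw

variable {Ω E : Type*} {mΩ : MeasurableSpace Ω} {mE : MeasurableSpace E}

theorem ae_tendsto_average_of_iIndepFun {μ : Measure Ω} {m : Measure E} {W : ℕ → Ω → E}
    (hW : ∀ i, Measurable (W i)) (hindep : iIndepFun W μ) (hident : ∀ i, μ.map (W i) = m)
    {f : E → ℝ} (hf : Measurable f) (hint : Integrable f m) :
    ∀ᵐ ω ∂μ, Tendsto (fun n : ℕ => (∑ i ∈ Finset.range n, f (W i ω)) / n) atTop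
      (𝓝 (∫ x, f x ∂m)) := by
  have hident0 : ∀ i, IdentDistrib (W i) (W 0) μ μ := fun i =>
    ⟨(hW i).aemeasurable, (hW 0).aemeasurable, by rw [hident i, hident 0]⟩
  have hint0 : Integrable (fun ω => f (W 0 ω)) μ := by
    rw [← hident 0] at hint
    exact hint.comp_measurable (hW 0)
  have hmean : ∫ ω, f (W 0 ω) ∂μ = ∫ x, f x ∂m := by
    rw [← hident 0, integral_map (hW 0).aemeasurable hf.aestronglyMeasurable]
  rw [← hmean]
  exact strong_law_ae_real (fun i ω => f (W i ω)) hint0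
    (fun i j hij => (hindep.indepFun hij).comp hf hf) fun i => (hident0 i).comp hf

theorem tendsto_div_of_tendsto_div_natCast {A B : ℕ → ℝ} {a b : ℝ}
    (hA : Tendsto (fun n => A n / n) atTop (𝓝 a)) (hB : Tendsto (fun n => B n / n) atTop (𝓝 b))
    (hb : b ≠ 0) : Tendsto (fun n => A n / B n) atTop (𝓝 (a / b)) := by
  refine (hA.div hB hb).congr' ?_
  filter_upwards [eventually_ne_atTop 0] with n hn
  exact div_div_div_cancel_right₀ (Nat.cast_ne_zero.mpr hn) _ _

theorem ae_tendsto_ratio_of_iIndepFun {μ : Measure Ω} {m : Measure E} {W : ℕ → Ω → E}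
    (hW : ∀ i, Measurable (W i)) (hindep : iIndepFun W μ) (hident : ∀ i, μ.map (W i) = m)
    {f h : E → ℝ} (hf : Measurable f) (hh : Measurable h) (hf_int : Integrable f m)
    (hh_int : Integrable h m) (hh_ne : ∫ x, h x ∂m ≠ 0) :
    ∀ᵐ ω ∂μ, Tendsto (fun n => (∑ i ∈ Finset.range n, f (W i ω)) / ∑ i ∈ Finset.range n, h (W i ω))
      atTop (𝓝 ((∫ x, f x ∂m) / ∫ x, h x ∂m)) := by
  filter_upwards [ae_tendsto_average_of_iIndepFun hW hindep hident hf hf_int,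
    ae_tendsto_average_of_iIndepFun hW hindep hident hh hh_int] with ω hf_avg hh_avg
  exact tendsto_div_of_tendsto_div_natCast hf_avg hh_avg hh_ne

end StrongLaw

theorem stmt_8_general {Θ Ω : Type*} [MeasurableSpace Θ] [MeasurableSpace Ω] {d : ℕ}
    (ν : Measure Θ) [IsProbabilityMeasure ν]
    (μ : Measure Ω)
    (Y : Θ → ℝ) (X : Θ → (Fin d → ℝ)) (S : Θ → Bool)
    (g : (Fin d → ℝ) → ℝ)
    (hY : Measurable Y) (hX : Measurable X) (hS : Measurable S) (hg : Measurable g)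
    (hs0 : ν {θ | S θ = false} ≠ 0)
    (hpos : ∀ᵐ x ∂((ν[|{θ | S θ = false}]).map X),
      0 < condDistrib S X ν x {true})
    (hcondDist : ∀ᵐ x ∂((ν[|{θ | S θ = false}]).map X),
      condDistrib Y X (ν[|{θ | S θ = true}]) x
        = condDistrib Y X (ν[|{θ | S θ = false}]) x)
    -- the weighted loss has finite mean
    (hWint : Integrable (fun θ =>
      if S θ = true then
        ((condDistrib S X ν (X θ) {false}).toReal
            / (condDistrib S X ν (X θ) {true}).toReal) * (Y θ - g (X θ)) ^ 2
      else 0) ν)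
    -- i.i.d. copies of (X, S, Y)
    (W : ℕ → Ω → ((Fin d → ℝ) × Bool × ℝ))
    (hWmeas : ∀ i, Measurable (W i))
    (hindep : iIndepFun W μ)
    (hident : ∀ i, μ.map (W i) = ν.map (fun θ => (X θ, S θ, Y θ))) :
    ∀ᵐ ω ∂μ, Tendsto (fun n =>
        (∑ i ∈ Finset.range n,
            if (W i ω).2.1 = true then
              ((condDistrib S X ν ((W i ω).1) {false}).toReal
                  / (condDistrib S X ν ((W i ω).1) {true}).toReal)
                * ((W i ω).2.2 - g ((W i ω).1)) ^ 2
            else 0)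
          / (∑ i ∈ Finset.range n, if (W i ω).2.1 = false then (1 : ℝ) else 0))
      atTop (nhds (∫ θ, (Y θ - g (X θ)) ^ 2 ∂(ν[|{θ | S θ = false}]))) := by
  set ipw : (Fin d → ℝ) × Bool × ℝ → ℝ := fun w => if w.2.1 = true then
    (condDistrib S X ν w.1 {false}).toReal / (condDistrib S X ν w.1 {true}).toReal
      * (w.2.2 - g w.1) ^ 2 else 0
  set isTarget : (Fin d → ℝ) × Bool × ℝ → ℝ := fun w => if w.2.1 = false then 1 else 0
  have hκ := fun b : Bool => Kernel.measurable_coe (condDistrib S X ν) (measurableSet_singleton b)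
  have hT : Measurable fun θ => (X θ, S θ, Y θ) := by fun_prop
  have hloss : Measurable (Function.uncurry fun x (y : ℝ) => (y - g x) ^ 2) := by fun_prop
  have hipw : Measurable ipw :=
    Measurable.ite (measurableSet_eq_fun (by fun_prop) measurable_const) (by fun_prop)
      measurable_const
  have hisTarget : Measurable isTarget :=
    Measurable.ite (measurableSet_eq_fun (by fun_prop) measurable_const) measurable_const
      measurable_const
  have hden_val :
      ∫ w, isTarget w ∂ν.map (fun θ => (X θ, S θ, Y θ)) = (ν {θ | S θ = false}).toReal := by
    rw [integral_map hT.aemeasurable hisTarget.aestronglyMeasurable,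
      ← measureReal_def, ← integral_indicator_one (s := {θ | S θ = false})
        (hS (measurableSet_singleton false))]
    congr 1 with θ
    by_cases h : S θ = false <;> simp [isTarget, h]
  have hlim : ∫ θ, (Y θ - g (X θ)) ^ 2 ∂(ν[|{θ | S θ = false}])
      = (∫ w, ipw w ∂ν.map (fun θ => (X θ, S θ, Y θ))) / (ν {θ | S θ = false}).toReal := by
    rw [integral_map hT.aemeasurable hipw.aestronglyMeasurable, integral_cond_eq_setIntegral_div]
    congr 1
    exact (integral_ite_odds_mul_eq_setIntegral hX hS hY hloss (fun _ _ => sq_nonneg _) hpos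
      hcondDist).symm
  rw [hlim, ← hden_val]
  refine ae_tendsto_ratio_of_iIndepFun hWmeas hindep hident hipw hisTarget
    ((integrable_map_measure hipw.aestronglyMeasurable hT.aemeasurable).2 hWint)
    (Integrable.of_bound hisTarget.aestronglyMeasurable 1 (ae_of_all _ fun w => ?_)) ?_
  · simp only [isTarget]
    split_ifs <;> simp
  · rw [hden_val]
    exact ENNReal.toReal_ne_zero.mpr ⟨hs0, measure_ne_top _ _⟩

/-- Under conditional independence of `Y` and `S` given `X` and positivity, the
inverse-probability-weighted estimator
`ψ̂ₙ = [Σᵢ 1{Sᵢ=1} o(Xᵢ) (Yᵢ − g(Xᵢ))²] / [Σᵢ 1{Sᵢ=0}]`, with true weights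
`o(X) = P(S=0|X)/P(S=1|X)`, computed from `n` i.i.d. copies of `(X, S, Y)`, converges
almost surely to the target-population MSE `E[(Y − g(X))² | S=0]` as `n → ∞`.
Here `(ν, X, S, Y)` describes the population, and `W i = (Xᵢ, Sᵢ, Yᵢ)` are the i.i.d.
copies defined on a probability space `(Ω, μ)`. -/
theorem stmt_8 {Θ Ω : Type*} [MeasurableSpace Θ] [MeasurableSpace Ω] {d : ℕ}
    (ν : Measure Θ) [IsProbabilityMeasure ν]
    (μ : Measure Ω) [IsProbabilityMeasure μ]
    (Y : Θ → ℝ) (X : Θ → (Fin d → ℝ)) (S : Θ → Bool)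
    (g : (Fin d → ℝ) → ℝ)
    (hY : Measurable Y) (hX : Measurable X) (hS : Measurable S) (hg : Measurable g)
    (hs1 : ν {θ | S θ = true} ≠ 0) (hs0 : ν {θ | S θ = false} ≠ 0)
    (hpos : ∀ᵐ x ∂((ν[|{θ | S θ = false}]).map X),
      0 < condDistrib S X ν x {true})
    (hcondDist : ∀ᵐ x ∂((ν[|{θ | S θ = false}]).map X),
      condDistrib Y X (ν[|{θ | S θ = true}]) x
        = condDistrib Y X (ν[|{θ | S θ = false}]) x)
    -- the weighted loss has finite mean
    (hWint : Integrable (fun θ =>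
      if S θ = true then
        ((condDistrib S X ν (X θ) {false}).toReal
            / (condDistrib S X ν (X θ) {true}).toReal) * (Y θ - g (X θ)) ^ 2
      else 0) ν)
    -- i.i.d. copies of (X, S, Y)
    (W : ℕ → Ω → ((Fin d → ℝ) × Bool × ℝ))
    (hWmeas : ∀ i, Measurable (W i))
    (hindep : iIndepFun W μ)
    (hident : ∀ i, μ.map (W i) = ν.map (fun θ => (X θ, S θ, Y θ))) :
    ∀ᵐ ω ∂μ, Tendsto (fun n =>
        (∑ i ∈ Finset.range n,
            if (W i ω).2.1 = true then
              ((condDistrib S X ν ((W i ω).1) {false}).toReal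
                  / (condDistrib S X ν ((W i ω).1) {true}).toReal)
                * ((W i ω).2.2 - g ((W i ω).1)) ^ 2
            else 0)
          / (∑ i ∈ Finset.range n, if (W i ω).2.1 = false then (1 : ℝ) else 0))
      atTop (nhds (∫ θ, (Y θ - g (X θ)) ^ 2 ∂(ν[|{θ | S θ = false}]))) :=
  stmt_8_general ν μ Y X S g hY hX hS hg hs0 hpos hcondDist hWint W hWmeas hindep hident
end

section
/- Suppose the conditional squared error e(X) = E[(Y − g(X))² | X, S=1] and the inverse odds w(X) = P(S=0 | X)/P(S=1 | X) are both nondecreasing functions of a real covariate X, with at least one of them non-constant under the source distribution. Then, under conditional independence of Y and S given X and positivity, the target-population MSE is at least the source-population MSE: E[(Y − g(X))² | S=0] ≥ E[(Y − g(X))² | S=1], with equality iff e(X) or w(X) is a.s. constant appropriately. -/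
/-! Let `ν₁`, `ν₀` be the laws of `X` given `S = 1` and `S = 0`. Disintegrating along `X`, the
source MSE is `∫ e ∂ν₁`, and by the conditional independence of `Y` and `S` given `X` the target
MSE is `∫ e ∂ν₀`. Bayes' rule gives `dν₀/dν₁ = ρ := w · P(S = 1)/P(S = 0)`, so the target MSE is
`∫ e ρ ∂ν₁` with `∫ ρ ∂ν₁ = 1`, and Chebyshev's correlation inequality for the similarly ordered
pair `e, ρ` gives `∫ e ρ ∂ν₁ ≥ ∫ e ∂ν₁`. Its defect is half of
`∫∫ (e x' - e x) (ρ x' - ρ x) dν₁(x) dν₁(x')`, whose integrand is nonnegative; if neither `e` nor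
`ρ` is a.e. constant, the integrand is positive on a product of two sets of positive measure. -/

open MeasureTheory ProbabilityTheory Filter Set

lemma exists_frequently_le_and_frequently_lt_of_not_eventuallyConst {α β : Type*}
    [MeasurableSpace α] {ν : Measure α} [TopologicalSpace β] [LinearOrder β] [OrderTopology β]
    [SecondCountableTopology β] [Nonempty β] {f : α → β} (h : ¬ EventuallyConst f (ae ν)) :
    ∃ r, (∃ᵐ x ∂ν, f x ≤ r) ∧ ∃ᵐ x ∂ν, r < f x := by
  contrapose! h
  rw [eventuallyConst_iff_exists_eventuallyEq]
  refine exists_eventuallyEq_const_of_forall_separating (· ∈ range (Iic : β → Set β)) ?_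
  rintro _ ⟨r, rfl⟩
  simpa [imp_iff_not_or, or_comm] using h r

lemma Filter.eventuallyConst_mul_const_iff {α G : Type*} [GroupWithZero G] {l : Filter α}
    {f : α → G} {k : G} (hk : k ≠ 0) : EventuallyConst (fun x => f x * k) l ↔ EventuallyConst f l :=
  ⟨fun h => (h.comp (· * k⁻¹)).congr (.of_forall fun x => mul_inv_cancel_right₀ hk (f x)),
    fun h => h.comp (· * k)⟩

section Chebyshev

variable {α : Type*} {f g : α → ℝ}

lemma Monovary.setOf_le_subset_or_subset (hfg : Monovary f g) (r r' : ℝ) :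
    {x | f x ≤ r} ⊆ {x | g x ≤ r'} ∨ {x | g x ≤ r'} ⊆ {x | f x ≤ r} := by
  by_contra! h
  obtain ⟨⟨u, hfu, hgu⟩, ⟨v, hgv, hfv⟩⟩ := And.imp not_subset.1 not_subset.1 h
  simp only [mem_ofPred_eq, not_le] at hfu hgu hgv hfv
  exact (hfg (hgv.trans_lt hgu)).not_gt (hfu.trans_lt hfv)

variable [MeasurableSpace α] {ν : Measure α}

lemma Monovary.frequently_prod_sub_mul_sub_pos [SFinite ν] (hfg : Monovary f g)
    (hf : ¬ EventuallyConst f (ae ν)) (hg : ¬ EventuallyConst g (ae ν)) :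
    ∃ᵐ p ∂ν.prod ν, 0 < (f p.2 - f p.1) * (g p.2 - g p.1) := by
  obtain ⟨r, hfr, hrf⟩ := exists_frequently_le_and_frequently_lt_of_not_eventuallyConst hf
  obtain ⟨r', hgr, hrg⟩ := exists_frequently_le_and_frequently_lt_of_not_eventuallyConst hg
  wlog hsub : {x | f x ≤ r} ⊆ {x | g x ≤ r'} generalizing f g r r'
  · simpa only [mul_comm] using this hfg.symm hg hf r' hgr hrg r hfr hrf
      ((hfg.setOf_le_subset_or_subset r r').resolve_left hsub)
  have hprod : {x | f x ≤ r} ×ˢ {x | r' < g x} ⊆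
      {p : α × α | 0 < (f p.2 - f p.1) * (g p.2 - g p.1)} := by
    rintro ⟨x, y⟩ ⟨hfx : f x ≤ r, hgy : r' < g y⟩
    have hfy : r < f y := not_le.1 fun h => (hsub h).not_gt hgy
    have hgx : g x ≤ r' := hsub hfx
    exact mul_pos (sub_pos.2 (hfx.trans_lt hfy)) (sub_pos.2 (hgx.trans_lt hgy))
  rw [frequently_ae_iff] at hfr hrg ⊢
  intro h0
  have := measure_mono_null hprod h0
  rw [Measure.prod_prod, mul_eq_zero] at this
  exact this.elim hfr hrg

lemma integrable_prod_sub_mul_sub [IsFiniteMeasure ν] (hfi : Integrable f ν)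
    (hgi : Integrable g ν) (hfgi : Integrable (fun x => f x * g x) ν) :
    Integrable (fun p : α × α => (f p.2 - f p.1) * (g p.2 - g p.1)) (ν.prod ν) :=
  (((hfgi.comp_snd ν).sub (hgi.mul_prod hfi)).sub ((hfi.mul_prod hgi).sub (hfgi.comp_fst ν))).congr
    (ae_of_all _ fun p => by simp only [Pi.sub_apply]; ring)

variable [IsProbabilityMeasure ν]

lemma integral_mul_eq_mul_integral_of_eventuallyConst (hf : EventuallyConst f (ae ν))
    (g : α → ℝ) : ∫ x, f x * g x ∂ν = (∫ x, f x ∂ν) * ∫ x, g x ∂ν := by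
  obtain ⟨c, hc⟩ := eventuallyConst_iff_exists_eventuallyEq.1 hf
  have hfg : (fun x => f x * g x) =ᵐ[ν] fun x => c * g x :=
    hc.mono fun x hx => congrArg (· * g x) hx
  rw [integral_congr_ae hc, integral_congr_ae hfg, integral_const_mul]
  simp

lemma integral_prod_sub_mul_sub (hfi : Integrable f ν) (hgi : Integrable g ν)
    (hfgi : Integrable (fun x => f x * g x) ν) :
    ∫ p, (f p.2 - f p.1) * (g p.2 - g p.1) ∂ν.prod ν
      = 2 * (∫ x, f x * g x ∂ν - (∫ x, f x ∂ν) * ∫ x, g x ∂ν) := by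
  have h₂ : Integrable (fun p : α × α => f p.2 * g p.2 - g p.1 * f p.2) (ν.prod ν) :=
    (hfgi.comp_snd ν).sub (hgi.mul_prod hfi)
  have h₁ : Integrable (fun p : α × α => f p.1 * g p.2 - f p.1 * g p.1) (ν.prod ν) :=
    (hfi.mul_prod hgi).sub (hfgi.comp_fst ν)
  have hexpand : (fun p : α × α => (f p.2 - f p.1) * (g p.2 - g p.1)) =
      fun p => (f p.2 * g p.2 - g p.1 * f p.2) - (f p.1 * g p.2 - f p.1 * g p.1) := by
    ext p; ring
  rw [hexpand, integral_sub h₂ h₁, integral_sub (hfgi.comp_snd ν) (hgi.mul_prod hfi),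
    integral_sub (hfi.mul_prod hgi) (hfgi.comp_fst ν), integral_fun_snd (fun x => f x * g x),
    integral_fun_fst (fun x => f x * g x), integral_prod_mul, integral_prod_mul]
  simp only [probReal_univ, one_smul]
  ring

theorem Monovary.integral_mul_integral_le_integral_mul (hfg : Monovary f g)
    (hfi : Integrable f ν) (hgi : Integrable g ν) (hfgi : Integrable (fun x => f x * g x) ν) :
    (∫ x, f x ∂ν) * ∫ x, g x ∂ν ≤ ∫ x, f x * g x ∂ν := by
  have := integral_nonneg (μ := ν.prod ν)
    (f := fun p => (f p.2 - f p.1) * (g p.2 - g p.1)) fun p => hfg.sub_mul_sub_nonneg p.1 p.2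
  rw [integral_prod_sub_mul_sub hfi hgi hfgi] at this
  linarith

theorem Monovary.integral_mul_eq_mul_integral_iff (hfg : Monovary f g)
    (hfi : Integrable f ν) (hgi : Integrable g ν) (hfgi : Integrable (fun x => f x * g x) ν) :
    ∫ x, f x * g x ∂ν = (∫ x, f x ∂ν) * ∫ x, g x ∂ν ↔
      EventuallyConst f (ae ν) ∨ EventuallyConst g (ae ν) := by
  refine ⟨fun h => ?_, ?_⟩
  · by_contra! hconst
    have hnonneg : 0 ≤ fun p : α × α => (f p.2 - f p.1) * (g p.2 - g p.1) :=
      fun p => hfg.sub_mul_sub_nonneg p.1 p.2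
    have hzero := integral_prod_sub_mul_sub hfi hgi hfgi
    rw [h, sub_self, mul_zero,
      integral_eq_zero_iff_of_nonneg hnonneg (integrable_prod_sub_mul_sub hfi hgi hfgi)] at hzero
    obtain ⟨p, hpos, hp⟩ :=
      ((hfg.frequently_prod_sub_mul_sub_pos hconst.1 hconst.2).and_eventually hzero).exists
    exact hpos.ne' hp
  · rintro (hc | hc)
    · exact integral_mul_eq_mul_integral_of_eventuallyConst hc g
    · simpa only [mul_comm] using integral_mul_eq_mul_integral_of_eventuallyConst hc f

end Chebyshev

theorem Monovary.integral_le_integral_of_eq_withDensity {α : Type*} [MeasurableSpace α]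
    {ν ν' : Measure α} [IsProbabilityMeasure ν] [IsProbabilityMeasure ν'] {f ρ : α → ℝ}
    (hν' : ν' = ν.withDensity fun x => ENNReal.ofReal (ρ x)) (hρ : Measurable ρ)
    (hρ0 : ∀ x, 0 ≤ ρ x) (hfρ : Monovary f ρ) (hf : Integrable f ν) (hf' : Integrable f ν') :
    ∫ x, f x ∂ν ≤ ∫ x, f x ∂ν' ∧
      (∫ x, f x ∂ν = ∫ x, f x ∂ν' ↔ EventuallyConst f (ae ν) ∨ EventuallyConst ρ (ae ν)) := by
  have hρ' : Measurable fun x => ENNReal.ofReal (ρ x) := hρ.ennreal_ofReal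
  have hlt : ∀ᵐ x ∂ν, ENNReal.ofReal (ρ x) < ⊤ := ae_of_all _ fun _ => ENNReal.ofReal_lt_top
  have hintegrable (h : α → ℝ) : Integrable h ν' ↔ Integrable (fun x => h x * ρ x) ν := by
    simp only [hν', integrable_withDensity_iff hρ' hlt, ENNReal.toReal_ofReal (hρ0 _)]
  have hintegral (h : α → ℝ) : ∫ x, h x ∂ν' = ∫ x, h x * ρ x ∂ν := by
    simp only [hν', integral_withDensity_eq_integral_toReal_smul hρ' hlt,
      ENNReal.toReal_ofReal (hρ0 _), smul_eq_mul, mul_comm]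
  have hρ_int : Integrable ρ ν := by simpa using (hintegrable 1).1 (integrable_const 1)
  have hρ_one : ∫ x, ρ x ∂ν = 1 := by simpa using (hintegral 1).symm
  have hfρ_int := (hintegrable f).1 hf'
  have hle := hfρ.integral_mul_integral_le_integral_mul hf hρ_int hfρ_int
  have heq := hfρ.integral_mul_eq_mul_integral_iff hf hρ_int hfρ_int
  rw [hρ_one, mul_one] at hle heq
  rw [hintegral f, eq_comm]
  exact ⟨hle, heq⟩

section Disintegration

variable {Ω α β : Type*} [MeasurableSpace Ω] [MeasurableSpace α] [MeasurableSpace β]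
  [StandardBorelSpace β] [Nonempty β] {μ : Measure Ω} [IsFiniteMeasure μ] {X : Ω → α}

lemma integral_comp_eq_integral_integral_condDistrib {Y : Ω → β} (hX : AEMeasurable X μ)
    (hY : AEMeasurable Y μ) {F : α × β → ℝ} (hF : Integrable F (μ.map fun ω => (X ω, Y ω))) :
    ∫ ω, F (X ω, Y ω) ∂μ = ∫ x, ∫ y, F (x, y) ∂condDistrib Y X μ x ∂μ.map X := by
  rw [← integral_map (hX.prodMk hY) hF.1, ← compProd_map_condDistrib hY,
    Measure.integral_compProd]
  rwa [compProd_map_condDistrib hY]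

variable {S : Ω → β}

lemma map_cond_preimage_eq_withDensity (hX : Measurable X) (hS : Measurable S) {t : Set β}
    (ht : MeasurableSet t) :
    (μ[|S ⁻¹' t]).map X =
      (μ.map X).withDensity fun x => (μ (S ⁻¹' t))⁻¹ * condDistrib S X μ x t := by
  ext A hA
  rw [Measure.map_apply hX hA, cond_apply (hS ht), withDensity_apply _ hA,
    lintegral_const_mul _ (Kernel.measurable_coe _ ht),
    setLIntegral_map hA (Kernel.measurable_coe _ ht) hX,
    setLIntegral_preimage_condDistrib hX hS.aemeasurable ht hA, inter_comm]

lemma map_cond_preimage_eq_withDensity_odds (hX : Measurable X) (hS : Measurable S)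
    {t t' : Set β} (ht : MeasurableSet t)
    (ht' : MeasurableSet t') (hμt : μ (S ⁻¹' t) ≠ 0) (hμt' : μ (S ⁻¹' t') ≠ 0)
    (hpos : ∀ᵐ x ∂μ.map X, condDistrib S X μ x t ≠ 0) :
    (μ[|S ⁻¹' t']).map X = ((μ[|S ⁻¹' t]).map X).withDensity fun x =>
      ENNReal.ofReal ((condDistrib S X μ x t').toReal / (condDistrib S X μ x t).toReal
        * (μ (S ⁻¹' t) / μ (S ⁻¹' t')).toReal) := by
  have hκ : Measurable fun x => condDistrib S X μ x t := Kernel.measurable_coe _ ht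
  have hκ' : Measurable fun x => condDistrib S X μ x t' := Kernel.measurable_coe _ ht'
  rw [map_cond_preimage_eq_withDensity hX hS ht', map_cond_preimage_eq_withDensity hX hS ht,
    ← withDensity_mul _ (by fun_prop) (by fun_prop)]
  refine withDensity_congr_ae ?_
  filter_upwards [hpos] with x hx
  set p := condDistrib S X μ x t
  set p' := condDistrib S X μ x t'
  set m := μ (S ⁻¹' t)
  set m' := μ (S ⁻¹' t')
  have hp : p ≠ ⊤ := measure_ne_top _ _
  rw [Pi.mul_apply, ENNReal.ofReal_mul (by positivity), ENNReal.ofReal_div_of_pos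
      (ENNReal.toReal_pos hx hp), ENNReal.ofReal_toReal (measure_ne_top _ _),
    ENNReal.ofReal_toReal hp, ENNReal.ofReal_toReal (ENNReal.div_ne_top (measure_ne_top _ _) hμt')]
  calc m'⁻¹ * p' = m'⁻¹ * p' * (p * p⁻¹) * (m * m⁻¹) := by
        rw [ENNReal.mul_inv_cancel hx hp, ENNReal.mul_inv_cancel hμt (measure_ne_top _ _)]; ring
    _ = m⁻¹ * p * (p' / p * (m / m')) := by simp only [div_eq_mul_inv]; ring

end Disintegration

theorem stmt_12_general {Ω : Type*} [MeasurableSpace Ω]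
    (μ : Measure Ω) [IsProbabilityMeasure μ]
    (Y : Ω → ℝ) (X : Ω → ℝ) (S : Ω → Bool) (g : ℝ → ℝ)
    (hY : Measurable Y) (hX : Measurable X) (hS : Measurable S) (hg : Measurable g)
    (hs1 : μ {ω | S ω = true} ≠ 0) (hs0 : μ {ω | S ω = false} ≠ 0)
    (hMSEint : Integrable (fun ω => (Y ω - g (X ω)) ^ 2) μ)
    (hpos : ∀ᵐ x ∂(μ.map X),
      0 < condDistrib S X μ x {true} ∧ condDistrib S X μ x {true} < 1)
    (hcondDist : ∀ᵐ x ∂(μ.map X),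
      condDistrib Y X (μ[|{ω | S ω = true}]) x
        = condDistrib Y X (μ[|{ω | S ω = false}]) x)
    -- e is nondecreasing in x
    (hemono : Monotone (fun x =>
      ∫ y, (y - g x) ^ 2 ∂(condDistrib Y X (μ[|{ω | S ω = true}]) x)))
    -- w is nondecreasing in x
    (hwmono : Monotone (fun x =>
      (condDistrib S X μ x {false}).toReal / (condDistrib S X μ x {true}).toReal)) :
    (∫ ω, (Y ω - g (X ω)) ^ 2 ∂(μ[|{ω | S ω = false}])
        ≥ ∫ ω, (Y ω - g (X ω)) ^ 2 ∂(μ[|{ω | S ω = true}]))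
    ∧ ((∫ ω, (Y ω - g (X ω)) ^ 2 ∂(μ[|{ω | S ω = false}])
          = ∫ ω, (Y ω - g (X ω)) ^ 2 ∂(μ[|{ω | S ω = true}]))
        ↔ ((∃ c, ∀ᵐ x ∂((μ[|{ω | S ω = true}]).map X),
              (∫ y, (y - g x) ^ 2 ∂(condDistrib Y X (μ[|{ω | S ω = true}]) x)) = c)
          ∨ (∃ c, ∀ᵐ x ∂((μ[|{ω | S ω = true}]).map X),
              (condDistrib S X μ x {false}).toReal
                / (condDistrib S X μ x {true}).toReal = c))) := by
  set s₁ := {ω | S ω = true}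
  set s₀ := {ω | S ω = false}
  have : IsProbabilityMeasure ((μ[|s₁]).map X) :=
    have := cond_isProbabilityMeasure hs1; Measure.isProbabilityMeasure_map hX.aemeasurable
  have : IsProbabilityMeasure ((μ[|s₀]).map X) :=
    have := cond_isProbabilityMeasure hs0; Measure.isProbabilityMeasure_map hX.aemeasurable
  set e := fun x => ∫ y, (y - g x) ^ 2 ∂(condDistrib Y X (μ[|s₁]) x)
  set w := fun x => (condDistrib S X μ x {false}).toReal / (condDistrib S X μ x {true}).toReal
  set k := (μ s₁ / μ s₀).toReal
  have hF (s : Set Ω) (hs : μ s ≠ 0) :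
      Integrable (fun p : ℝ × ℝ => (p.2 - g p.1) ^ 2) ((μ[|s]).map fun ω => (X ω, Y ω)) := by
    rw [integrable_map_measure (by fun_prop) (by fun_prop)]
    exact hMSEint.restrict.smul_measure (ENNReal.inv_ne_top.2 hs)
  have hMSE (s : Set Ω) (hs : μ s ≠ 0) : ∫ ω, (Y ω - g (X ω)) ^ 2 ∂(μ[|s]) =
      ∫ x, ∫ y, (y - g x) ^ 2 ∂(condDistrib Y X (μ[|s]) x) ∂(μ[|s]).map X :=
    integral_comp_eq_integral_integral_condDistrib hX.aemeasurable hY.aemeasurable (hF s hs)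
  have he₀ : (fun x => ∫ y, (y - g x) ^ 2 ∂(condDistrib Y X (μ[|s₀]) x)) =ᵐ[(μ[|s₀]).map X] e :=
    (cond_absolutelyContinuous.map hX).ae_le <| hcondDist.mono fun x hx => by simp only [e, hx]
  have hodds : (μ[|s₀]).map X =
      ((μ[|s₁]).map X).withDensity fun x => ENNReal.ofReal (w x * k) :=
    map_cond_preimage_eq_withDensity_odds hX hS (measurableSet_singleton true)
      (measurableSet_singleton false) hs1 hs0 (hpos.mono fun x hx => hx.1.ne')
  have hk : 0 < k := ENNReal.toReal_pos (ENNReal.div_ne_zero.2 ⟨hs1, measure_ne_top _ _⟩)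
    (ENNReal.div_ne_top (measure_ne_top _ _) hs0)
  have key := (hemono.monovary (hwmono.mul_const hk.le)).integral_le_integral_of_eq_withDensity
    hodds (hwmono.measurable.mul_const k) (fun x => by positivity)
    ((hF s₁ hs1).integral_condDistrib_map hY.aemeasurable)
    (((hF s₀ hs0).integral_condDistrib_map hY.aemeasurable).congr he₀)
  rw [hMSE s₁ hs1, hMSE s₀ hs0, integral_congr_ae he₀, ge_iff_le, eq_comm, key.2,
    eventuallyConst_mul_const_iff hk.ne',
    eventuallyConst_iff_exists_eventuallyEq, eventuallyConst_iff_exists_eventuallyEq]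
  exact ⟨key.1, Iff.rfl⟩

/-- Suppose the conditional squared error `e(x) = E[(Y − g(X))² | X = x, S=1]` and the
inverse odds `w(x) = P(S=0|X=x)/P(S=1|X=x)` are both nondecreasing functions of a real
covariate `X`, with at least one of them non-constant under the source distribution.
Then, under conditional independence of `Y` and `S` given `X` and positivity, the
target-population MSE is at least the source-population MSE:
`E[(Y − g(X))² | S=0] ≥ E[(Y − g(X))² | S=1]`, with equality iff `e(X)` or `w(X)` is
a.s. constant (under the source law of `X`). -/
theorem stmt_12 {Ω : Type*} [MeasurableSpace Ω]
    (μ : Measure Ω) [IsProbabilityMeasure μ]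
    (Y : Ω → ℝ) (X : Ω → ℝ) (S : Ω → Bool) (g : ℝ → ℝ)
    (hY : Measurable Y) (hX : Measurable X) (hS : Measurable S) (hg : Measurable g)
    (hs1 : μ {ω | S ω = true} ≠ 0) (hs0 : μ {ω | S ω = false} ≠ 0)
    (hY2int : Integrable (fun ω => (Y ω) ^ 2) μ)
    (hMSEint : Integrable (fun ω => (Y ω - g (X ω)) ^ 2) μ)
    (hpos : ∀ᵐ x ∂(μ.map X),
      0 < condDistrib S X μ x {true} ∧ condDistrib S X μ x {true} < 1)
    (hcondDist : ∀ᵐ x ∂(μ.map X),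
      condDistrib Y X (μ[|{ω | S ω = true}]) x
        = condDistrib Y X (μ[|{ω | S ω = false}]) x)
    -- e is nondecreasing in x
    (hemono : Monotone (fun x =>
      ∫ y, (y - g x) ^ 2 ∂(condDistrib Y X (μ[|{ω | S ω = true}]) x)))
    -- w is nondecreasing in x
    (hwmono : Monotone (fun x =>
      (condDistrib S X μ x {false}).toReal / (condDistrib S X μ x {true}).toReal))
    -- at least one of e and w is non-constant under the source distribution of X
    (hnonconst :
      (¬ ∃ c, ∀ᵐ x ∂((μ[|{ω | S ω = true}]).map X),
          (∫ y, (y - g x) ^ 2 ∂(condDistrib Y X (μ[|{ω | S ω = true}]) x)) = c)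
      ∨ (¬ ∃ c, ∀ᵐ x ∂((μ[|{ω | S ω = true}]).map X),
          (condDistrib S X μ x {false}).toReal
            / (condDistrib S X μ x {true}).toReal = c)) :
    (∫ ω, (Y ω - g (X ω)) ^ 2 ∂(μ[|{ω | S ω = false}])
        ≥ ∫ ω, (Y ω - g (X ω)) ^ 2 ∂(μ[|{ω | S ω = true}]))
    ∧ ((∫ ω, (Y ω - g (X ω)) ^ 2 ∂(μ[|{ω | S ω = false}])
          = ∫ ω, (Y ω - g (X ω)) ^ 2 ∂(μ[|{ω | S ω = true}]))
        ↔ ((∃ c, ∀ᵐ x ∂((μ[|{ω | S ω = true}]).map X),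
              (∫ y, (y - g x) ^ 2 ∂(condDistrib Y X (μ[|{ω | S ω = true}]) x)) = c)
          ∨ (∃ c, ∀ᵐ x ∂((μ[|{ω | S ω = true}]).map X),
              (condDistrib S X μ x {false}).toReal
                / (condDistrib S X μ x {true}).toReal = c))) :=
  stmt_12_general μ Y X S g hY hX hS hg hs1 hs0 hMSEint hpos hcondDist hemono hwmono
end

section
/- Under conditional independence of Y and S given X, positivity, and square-integrability, the function g minimizing the target-population MSE E[(Y − g(X))² | S=0] over all measurable g is g(x) = E[Y | X = x, S=1] (restricted to the target support); i.e., the source-population regression function is MSE-optimal for the target population. -/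
/-!
On the target population, `Y - E[Y | X]` is orthogonal in `L²` to every square-integrable
function of `X` (pull-out property of conditional expectation), which gives the Pythagorean
decomposition `E[(Y - g X)²] = E[(Y - E[Y | X])²] + E[(E[Y | X] - g X)²]`. Hence the target
regression function is the a.s. unique minimiser of the target risk, and by the equality of the
conditional laws of `Y` given `X` it coincides, a.s. under the target law of `X`, with the
source regression function `x ↦ ∫ y ∂(condDistrib Y X μ[|S = 1] x)`.
-/

open MeasureTheory ProbabilityTheory

section ConditionalExpectation

variable {Ω : Type*} {m m₀ : MeasurableSpace Ω} {μ : Measure Ω} {Y Z : Ω → ℝ}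

theorem integral_mul_condExp_of_stronglyMeasurable (hm : m ≤ m₀) [SigmaFinite (μ.trim hm)]
    (hZm : StronglyMeasurable[m] Z) (hZY : Integrable (Z * Y) μ) (hY : Integrable Y μ) :
    ∫ ω, Z ω * μ[Y|m] ω ∂μ = ∫ ω, Z ω * Y ω ∂μ :=
  calc ∫ ω, Z ω * μ[Y|m] ω ∂μ = ∫ ω, μ[Z * Y|m] ω ∂μ :=
        integral_congr_ae (condExp_mul_of_stronglyMeasurable_left hZm hZY hY).symm
    _ = ∫ ω, Z ω * Y ω ∂μ := integral_condExp hm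

theorem integral_sq_sub_eq_integral_sq_sub_condExp_add [IsFiniteMeasure μ] (hm : m ≤ m₀)
    (hY : MemLp Y 2 μ) (hZm : StronglyMeasurable[m] Z) (hZ : MemLp Z 2 μ) :
    ∫ ω, (Y ω - Z ω) ^ 2 ∂μ
      = ∫ ω, (Y ω - μ[Y|m] ω) ^ 2 ∂μ + ∫ ω, (μ[Y|m] ω - Z ω) ^ 2 ∂μ := by
  set C := μ[Y|m]
  have hC : MemLp C 2 μ := hY.condExp one_le_two
  have hW : MemLp (C - Z) 2 μ := hC.sub hZ
  have hE : Integrable (fun ω => (Y ω - C ω) ^ 2) μ := (hY.sub hC).integrable_sq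
  have hW2 : Integrable (fun ω => (C ω - Z ω) ^ 2) μ := hW.integrable_sq
  have hWY : Integrable (fun ω => (C ω - Z ω) * Y ω) μ := hW.integrable_mul hY
  have hWC : Integrable (fun ω => (C ω - Z ω) * C ω) μ := hW.integrable_mul hC
  have hcross : Integrable (fun ω => 2 * ((C ω - Z ω) * Y ω - (C ω - Z ω) * C ω)) μ :=
    (hWY.sub hWC).const_mul 2
  have hrest : Integrable (fun ω => (C ω - Z ω) ^ 2
      + 2 * ((C ω - Z ω) * Y ω - (C ω - Z ω) * C ω)) μ :=
    hW2.add hcross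
  have horth : ∫ ω, (C ω - Z ω) * C ω ∂μ = ∫ ω, (C ω - Z ω) * Y ω ∂μ :=
    integral_mul_condExp_of_stronglyMeasurable hm (stronglyMeasurable_condExp.sub hZm)
      hWY (hY.integrable one_le_two)
  calc ∫ ω, (Y ω - Z ω) ^ 2 ∂μ
      = ∫ ω, ((Y ω - C ω) ^ 2
          + ((C ω - Z ω) ^ 2 + 2 * ((C ω - Z ω) * Y ω - (C ω - Z ω) * C ω))) ∂μ := by
        congr with ω; ring
    _ = ∫ ω, (Y ω - C ω) ^ 2 ∂μ + ∫ ω, (C ω - Z ω) ^ 2 ∂μ := by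
        rw [integral_add hE hrest, integral_add hW2 hcross, integral_const_mul,
          integral_sub hWY hWC, horth, sub_self, mul_zero, add_zero]

end ConditionalExpectation

section Regression

variable {Ω β : Type*} {mΩ : MeasurableSpace Ω} [MeasurableSpace β] {ν : Measure Ω}
  [IsFiniteMeasure ν] {X : Ω → β} {Y : Ω → ℝ}

theorem measurable_integral_condDistrib : Measurable fun x => ∫ y, y ∂condDistrib Y X ν x :=
  stronglyMeasurable_id.integral_kernel.measurable

theorem memLp_integral_condDistrib_comp (hX : Measurable X) {p : ENNReal} (hp : 1 ≤ p)
    (hY : MemLp Y p ν) : MemLp (fun ω => ∫ y, y ∂condDistrib Y X ν (X ω)) p ν :=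
  (hY.condExp hp).ae_eq (condExp_ae_eq_integral_condDistrib' hX (hY.integrable hp))

theorem integral_sq_sub_comp_eq_integral_sq_sub_condDistrib_add (hX : Measurable X)
    (hY : MemLp Y 2 ν) {g : β → ℝ} (hg : Measurable g) (hgX : MemLp (fun ω => g (X ω)) 2 ν) :
    ∫ ω, (Y ω - g (X ω)) ^ 2 ∂ν
      = ∫ ω, (Y ω - ∫ y, y ∂condDistrib Y X ν (X ω)) ^ 2 ∂ν
        + ∫ ω, ((∫ y, y ∂condDistrib Y X ν (X ω)) - g (X ω)) ^ 2 ∂ν := by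
  have hce := condExp_ae_eq_integral_condDistrib' hX (hY.integrable one_le_two)
  rw [integral_sq_sub_eq_integral_sq_sub_condExp_add (Z := fun ω => g (X ω)) hX.comap_le hY
    (hg.comp (comap_measurable X)).stronglyMeasurable hgX]
  congr 1 <;> refine integral_congr_ae (hce.mono fun ω hω => ?_) <;> simp only [hω]

theorem integral_sq_sub_integral_condDistrib_le (hX : Measurable X) (hY : MemLp Y 2 ν)
    {g : β → ℝ} (hg : Measurable g) (hgX : MemLp (fun ω => g (X ω)) 2 ν) :
    ∫ ω, (Y ω - ∫ y, y ∂condDistrib Y X ν (X ω)) ^ 2 ∂ν ≤ ∫ ω, (Y ω - g (X ω)) ^ 2 ∂ν := by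
  rw [integral_sq_sub_comp_eq_integral_sq_sub_condDistrib_add hX hY hg hgX]
  exact le_add_of_nonneg_right (integral_nonneg fun _ => sq_nonneg _)

theorem ae_eq_integral_condDistrib_of_integral_sq_sub_eq (hX : Measurable X)
    (hY : MemLp Y 2 ν) {g : β → ℝ} (hg : Measurable g) (hgX : MemLp (fun ω => g (X ω)) 2 ν)
    (heq : ∫ ω, (Y ω - ∫ y, y ∂condDistrib Y X ν (X ω)) ^ 2 ∂ν
      = ∫ ω, (Y ω - g (X ω)) ^ 2 ∂ν) :
    ∀ᵐ x ∂ν.map X, g x = ∫ y, y ∂condDistrib Y X ν x := by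
  rw [integral_sq_sub_comp_eq_integral_sq_sub_condDistrib_add hX hY hg hgX,
    left_eq_add] at heq
  have hdiff : MemLp (fun ω => (∫ y, y ∂condDistrib Y X ν (X ω)) - g (X ω)) 2 ν :=
    (memLp_integral_condDistrib_comp hX one_le_two hY).sub hgX
  have hgap : (fun ω => ((∫ y, y ∂condDistrib Y X ν (X ω)) - g (X ω)) ^ 2) =ᵐ[ν] 0 :=
    (integral_eq_zero_iff_of_nonneg (fun _ => sq_nonneg _) hdiff.integrable_sq).1 heq
  refine (ae_map_iff hX.aemeasurable
    (measurableSet_eq_fun hg measurable_integral_condDistrib)).2 (hgap.mono fun ω hω => ?_)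
  exact (sub_eq_zero.1 (pow_eq_zero_iff two_ne_zero |>.1 hω)).symm

end Regression

theorem stmt_13_general {Ω : Type*} [MeasurableSpace Ω] {d : ℕ}
    (μ : Measure Ω)
    (Y : Ω → ℝ) (X : Ω → (Fin d → ℝ)) (S : Ω → Bool)
    (hY : Measurable Y) (hX : Measurable X)
    (hs0 : μ {ω | S ω = false} ≠ 0)
    (hY2int : Integrable (fun ω => (Y ω) ^ 2) μ)
    (hcondDist : ∀ᵐ x ∂((μ[|{ω | S ω = false}]).map X),
      condDistrib Y X (μ[|{ω | S ω = true}]) x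
        = condDistrib Y X (μ[|{ω | S ω = false}]) x) :
    ∀ g : (Fin d → ℝ) → ℝ, Measurable g →
      Integrable (fun ω => (g (X ω)) ^ 2) (μ[|{ω | S ω = false}]) →
      ((∫ ω, (Y ω - (fun x => ∫ y, y ∂(condDistrib Y X (μ[|{ω | S ω = true}]) x))
              (X ω)) ^ 2 ∂(μ[|{ω | S ω = false}]))
          ≤ ∫ ω, (Y ω - g (X ω)) ^ 2 ∂(μ[|{ω | S ω = false}]))
      ∧ ((∫ ω, (Y ω - (fun x => ∫ y, y ∂(condDistrib Y X (μ[|{ω | S ω = true}]) x))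
              (X ω)) ^ 2 ∂(μ[|{ω | S ω = false}]))
            = (∫ ω, (Y ω - g (X ω)) ^ 2 ∂(μ[|{ω | S ω = false}]))
          → ∀ᵐ x ∂((μ[|{ω | S ω = false}]).map X),
              g x = ∫ y, y ∂(condDistrib Y X (μ[|{ω | S ω = true}]) x)) := by
  intro g hg hgX
  set ν := μ[|{ω | S ω = false}]
  have hY2 : MemLp Y 2 ν :=
    (((memLp_two_iff_integrable_sq hY.aestronglyMeasurable).2 hY2int).restrict _).smul_measure
      (ENNReal.inv_ne_top.2 hs0)
  have hreg_eq : ∀ᵐ x ∂ν.map X, ∫ y, y ∂condDistrib Y X (μ[|{ω | S ω = true}]) x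
      = ∫ y, y ∂condDistrib Y X ν x :=
    hcondDist.mono fun x hx => by rw [hx]
  have hrisk : ∫ ω, (Y ω - ∫ y, y ∂condDistrib Y X (μ[|{ω | S ω = true}]) (X ω)) ^ 2 ∂ν
      = ∫ ω, (Y ω - ∫ y, y ∂condDistrib Y X ν (X ω)) ^ 2 ∂ν :=
    integral_congr_ae ((ae_of_ae_map hX.aemeasurable hreg_eq).mono fun ω hω => by simp only [hω])
  have hgX2 : MemLp (fun ω => g (X ω)) 2 ν :=
    (memLp_two_iff_integrable_sq (hg.comp hX).aestronglyMeasurable).2 hgX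
  beta_reduce
  rw [hrisk]
  refine ⟨integral_sq_sub_integral_condDistrib_le hX hY2 hg hgX2, fun heq => ?_⟩
  filter_upwards [ae_eq_integral_condDistrib_of_integral_sq_sub_eq hX hY2 hg hgX2 heq,
    hreg_eq] with x hgx hx
  rw [hgx, hx]

/-- Under conditional independence of `Y` and `S` given `X`, positivity, and
square-integrability, the function minimizing the target-population MSE
`E[(Y − g(X))² | S=0]` over all measurable `g` with `E[g(X)² | S=0] < ∞` is the
source-population regression function `r(x) = E[Y | X = x, S=1]`, and the minimizer is
a.s. unique under the target law of `X`. -/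
theorem stmt_13 {Ω : Type*} [MeasurableSpace Ω] {d : ℕ}
    (μ : Measure Ω) [IsProbabilityMeasure μ]
    (Y : Ω → ℝ) (X : Ω → (Fin d → ℝ)) (S : Ω → Bool)
    (hY : Measurable Y) (hX : Measurable X) (hS : Measurable S)
    (hs1 : μ {ω | S ω = true} ≠ 0) (hs0 : μ {ω | S ω = false} ≠ 0)
    (hY2int : Integrable (fun ω => (Y ω) ^ 2) μ)
    (hpos : ∀ᵐ x ∂((μ[|{ω | S ω = false}]).map X),
      0 < condDistrib S X μ x {true})
    (hcondDist : ∀ᵐ x ∂((μ[|{ω | S ω = false}]).map X),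
      condDistrib Y X (μ[|{ω | S ω = true}]) x
        = condDistrib Y X (μ[|{ω | S ω = false}]) x) :
    ∀ g : (Fin d → ℝ) → ℝ, Measurable g →
      Integrable (fun ω => (g (X ω)) ^ 2) (μ[|{ω | S ω = false}]) →
      ((∫ ω, (Y ω - (fun x => ∫ y, y ∂(condDistrib Y X (μ[|{ω | S ω = true}]) x))
              (X ω)) ^ 2 ∂(μ[|{ω | S ω = false}]))
          ≤ ∫ ω, (Y ω - g (X ω)) ^ 2 ∂(μ[|{ω | S ω = false}]))
      ∧ ((∫ ω, (Y ω - (fun x => ∫ y, y ∂(condDistrib Y X (μ[|{ω | S ω = true}]) x))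
              (X ω)) ^ 2 ∂(μ[|{ω | S ω = false}]))
            = (∫ ω, (Y ω - g (X ω)) ^ 2 ∂(μ[|{ω | S ω = false}]))
          → ∀ᵐ x ∂((μ[|{ω | S ω = false}]).map X),
              g x = ∫ y, y ∂(condDistrib Y X (μ[|{ω | S ω = true}]) x)) :=
  stmt_13_general μ Y X S hY hX hs0 hY2int hcondDist
end
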